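/- Let R be a commutative ring, let k ≥ 2 be a natural number, and let p, q ∈ R[X] with p.coeff 0 = 0, p.coeff 1 = 1, q.coeff 0 = 0, q.coeff 1 = 1, and q.coeff i = 0 for all i with 2 ≤ i < k. Then for every i ≤ k one has (p.comp q).coeff i = (q.comp p).coeff i; equivalently, all coefficients of p.comp q − q.comp p in degrees ≤ k vanish. -/

import Mathlib

open Polynomial

/-!
Write `p = X + t` and `q = X + s` with `X ^ 2 ∣ t` and `X ^ k ∣ s`; then
`p ∘ q - q ∘ p = (t ∘ q - t) - (s ∘ p - s)`. If `f = X ^ (m + 1) * u`, then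
`f ∘ g - f = (g ^ (m + 1) - X ^ (m + 1)) * u ∘ g + X ^ (m + 1) * (u ∘ g - u)`, and `g - X`
divides both brackets, the first one with a cofactor divisible by `X ^ m` because `X ∣ g`.
Hence both differences vanish to order `k + 1`.
-/

namespace Polynomial

variable {R : Type*} [CommRing R]

theorem sub_X_dvd_comp_sub_self (f g : R[X]) : g - X ∣ f.comp g - f := by
  simpa [eval_map, ← comp.eq_1, comp_X] using sub_dvd_eval_sub g X (f.map C)

theorem X_pow_dvd_pow_sub_X_pow {g : R[X]} {n : ℕ} (hg : X ^ (n + 1) ∣ g - X) (m : ℕ) :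
    X ^ (m + n + 1) ∣ g ^ (m + 1) - X ^ (m + 1) := by
  have hX : X ∣ g := by
    simpa using dvd_add ((dvd_pow_self X n.succ_ne_zero).trans hg) (dvd_refl X)
  have hsum : X ^ m ∣ ∑ i ∈ Finset.range (m + 1), g ^ i * X ^ (m + 1 - 1 - i) :=
    Finset.dvd_sum fun i hi => by
      rw [Finset.mem_range] at hi
      calc X ^ m = X ^ i * X ^ (m + 1 - 1 - i) := by rw [← pow_add]; congr 1; omega
        _ ∣ g ^ i * X ^ (m + 1 - 1 - i) := mul_dvd_mul_right (pow_dvd_pow_of_dvd hX i) _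
  rw [← geom_sum₂_mul, add_assoc, pow_add]
  exact mul_dvd_mul hsum hg

theorem X_pow_dvd_comp_sub_self {f g : R[X]} {m n : ℕ} (hf : X ^ (m + 1) ∣ f)
    (hg : X ^ (n + 1) ∣ g - X) : X ^ (m + n + 1) ∣ f.comp g - f := by
  obtain ⟨u, rfl⟩ := hf
  have hsplit : (X ^ (m + 1) * u).comp g - X ^ (m + 1) * u =
      (g ^ (m + 1) - X ^ (m + 1)) * u.comp g + X ^ (m + 1) * (u.comp g - u) := by
    rw [mul_comp, X_pow_comp]; ring
  have htail : X ^ (m + n + 1) ∣ X ^ (m + 1) * (u.comp g - u) :=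
    calc X ^ (m + n + 1) ∣ X ^ (m + 1) * X ^ (n + 1) := by
          rw [← pow_add]; exact pow_dvd_pow X (by omega)
      _ ∣ X ^ (m + 1) * (u.comp g - u) :=
        mul_dvd_mul_left _ (hg.trans (sub_X_dvd_comp_sub_self u g))
  rw [hsplit]
  exact dvd_add (dvd_mul_of_dvd_left (X_pow_dvd_pow_sub_X_pow hg m) _) htail

theorem X_pow_dvd_sub_X {f : R[X]} {n : ℕ} (h0 : f.coeff 0 = 0) (h1 : f.coeff 1 = 1)
    (h : ∀ i, 2 ≤ i → i < n → f.coeff i = 0) : X ^ n ∣ f - X := by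
  refine X_pow_dvd_iff.mpr fun i hi => ?_
  rw [coeff_sub, coeff_X]
  rcases i with _ | _ | i
  · simp [h0]
  · simp [h1]
  · simp [h (i + 2) (by omega) hi]

theorem comp_sub_comp_eq (p q : R[X]) :
    p.comp q - q.comp p = ((p - X).comp q - (p - X)) - ((q - X).comp p - (q - X)) := by
  simp only [sub_comp, X_comp]; ring

end Polynomial

/-- Model for `[N, N^k] ⊆ N^{k+1}`: if `p = X + (higher order)` and
`q = X + (terms of degree ≥ k)` with `k ≥ 2`, then `p ∘ q` and `q ∘ p` agree in all
degrees `≤ k`; equivalently all coefficients of `p.comp q − q.comp p` in degrees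
`≤ k` vanish. -/
theorem jet_group_comm_coeff (R : Type*) [CommRing R] (k : ℕ) (hk : 2 ≤ k)
    (p q : Polynomial R)
    (hp0 : p.coeff 0 = 0) (hp1 : p.coeff 1 = 1)
    (hq0 : q.coeff 0 = 0) (hq1 : q.coeff 1 = 1)
    (hq : ∀ i, 2 ≤ i → i < k → q.coeff i = 0) :
    ∀ i ≤ k, (p.comp q).coeff i = (q.comp p).coeff i := by
  obtain ⟨j, rfl⟩ := Nat.exists_eq_add_of_le' hk
  have hpX : X ^ 2 ∣ p - X := X_pow_dvd_sub_X hp0 hp1 fun _ _ _ => by omega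
  have hqX : X ^ (j + 2) ∣ q - X := X_pow_dvd_sub_X hq0 hq1 hq
  have hpq := X_pow_dvd_comp_sub_self (m := 1) (n := j + 1) hpX hqX
  have hqp := X_pow_dvd_comp_sub_self (m := j + 1) (n := 1) hqX hpX
  rw [show 1 + (j + 1) + 1 = j + 3 by omega] at hpq
  have hcomm : X ^ (j + 3) ∣ p.comp q - q.comp p := by
    rw [comp_sub_comp_eq]
    exact dvd_sub hpq hqp
  intro i hi
  rw [← sub_eq_zero, ← coeff_sub]
  exact X_pow_dvd_iff.mp hcomm i (by omega)
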